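/- The sum of the two gradients at θ_E = 1 with k = 1/2 is nonzero: since the BC score expectation vanishes at the expert parameter and d/dθ log p_θ(s₂)|_{θ=1} < 0, the EDM objective gradient at the expert parameter is nonzero. -/

import Mathlib

open Real

theorem HasDerivAt.log_div {f g : ℝ → ℝ} {f' g' x : ℝ} (hf : HasDerivAt f f' x)
    (hg : HasDerivAt g g' x) (hfx : f x ≠ 0) (hgx : g x ≠ 0) :
    HasDerivAt (fun t => Real.log (f t / g t)) (f' / f x - g' / g x) x := by
  refine ((hf.fun_div hg hgx).log (div_ne_zero hfx hgx)).congr_deriv ?_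
  field_simp

noncomputable def score (t : ℝ) : ℝ :=
  (1 / 2) * exp (t / 2) / (1 + exp (t / 2))
    - (exp t + (1 / 2) * exp (t / 2)) / (2 + exp t + exp (t / 2))

theorem hasDerivAt_score (t : ℝ) :
    HasDerivAt (fun t : ℝ => log ((1 + exp (t / 2)) / (2 + exp t + exp (t / 2)))) (score t) t := by
  have hhalf : HasDerivAt (fun t : ℝ => exp (t / 2)) (exp (t / 2) * (1 / 2)) t :=
    ((hasDerivAt_id' t).div_const 2).exp
  refine HasDerivAt.log_div (hhalf.const_add 1) (((hasDerivAt_exp t).const_add 2).fun_add hhalf)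
    (by positivity) (by positivity) |>.congr_deriv ?_
  unfold score
  ring

/-- With `x = e^{t/2}` the sign of `score t` is that of `x (1 - 2x - x²)`, negative once `x ≥ 1`. -/
theorem score_neg {t : ℝ} (ht : 0 ≤ t) : score t < 0 := by
  set x := exp (t / 2) with hx
  have hx1 : 1 ≤ x := one_le_exp (by linarith)
  have hsq : exp t = x ^ 2 := by rw [hx, ← exp_nat_mul]; congr 1; ring
  rw [score, hsq, sub_neg, div_lt_div_iff₀ (by positivity) (by positivity)]
  nlinarith

theorem stmt_17 :
    (0 : ℝ) + deriv (fun t : ℝ =>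
        Real.log ((1 + Real.exp (t / 2)) / (2 + Real.exp t + Real.exp (t / 2)))) 1 ≠ 0 ∧
    (1 / 2) * Real.exp (1 / 2) / (1 + Real.exp (1 / 2))
      - (Real.exp 1 + (1 / 2) * Real.exp (1 / 2)) / (2 + Real.exp 1 + Real.exp (1 / 2)) ≠ 0 := by
  have hneg : score 1 < 0 := score_neg zero_le_one
  refine ⟨?_, hneg.ne⟩
  rw [zero_add, (hasDerivAt_score 1).deriv]
  exact hneg.ne
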